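/- Let g be either the identity function on the open unit disc 𝔻 or an elliptic Möbius transformation fixing 𝔻, and let g₁, g₂, … be non-constant holomorphic self-maps of 𝔻 such that Σₙ ρ(gₙ(a), g(a)) < ∞ and Σₙ ρ(gₙ(b), g(b)) < ∞ for two distinct points a, b ∈ 𝔻. Then the sequence (Gₙ ∘ g⁻ⁿ), where Gₙ = g₁ ∘ g₂ ∘ ⋯ ∘ gₙ, converges locally uniformly on 𝔻 to a non-constant holomorphic self-map of 𝔻. -/

import Mathlib

open Complex Set Filter Metric

/-- The open unit disc in the complex plane. -/
def unitDisc : Set ℂ := {z : ℂ | ‖z‖ < 1}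

/-- Inverse hyperbolic tangent. -/
noncomputable def artanh (x : ℝ) : ℝ := (1 / 2) * Real.log ((1 + x) / (1 - x))

/-- The hyperbolic distance on the unit disc, induced by the Riemannian metric
`2|dz|/(1-|z|²)`. -/
noncomputable def hdist (z w : ℂ) : ℝ :=
  2 * artanh ‖(z - w) / (1 - (starRingEnd ℂ) w * z)‖

/-- Left compositions: `leftComp f n = f (n-1) ∘ ⋯ ∘ f 1 ∘ f 0`, so that `f k`
plays the role of the `(k+1)`-st map `f_{k+1}` of the sequence. -/
def leftComp (f : ℕ → ℂ → ℂ) : ℕ → ℂ → ℂ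
  | 0 => id
  | n + 1 => f n ∘ leftComp f n

/-- Right compositions: `rightComp g n = g 0 ∘ g 1 ∘ ⋯ ∘ g (n-1)`, so that `g k`
plays the role of the `(k+1)`-st map `g_{k+1}` of the sequence. -/
def rightComp (g : ℕ → ℂ → ℂ) : ℕ → ℂ → ℂ
  | 0 => id
  | n + 1 => rightComp g n ∘ g n

/-!
Write `Fₙ = Gₙ ∘ g⁻ⁿ` and work with the pseudo-hyperbolic distance `tanh (ρ / 2)`. With
`w = g⁻ⁿ⁻¹ z`, Schwarz–Pick applied to `Gₙ` and to `g` bounds the step from `Fₙ z` to `Fₙ₊₁ z` by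
the displacement of `g⁻¹ ∘ gₙ₊₁` at `w`, and `w` stays in a compact set because `g⁻¹` is a
hyperbolic isometry with a fixed point. A two-point estimate bounds the displacement of any
self-map on a compact set linearly by its displacements at `a` and `b`, and those of `g⁻¹ ∘ gₙ₊₁`
are at most `ρ(gₙ₊₁ a, g a)` and `ρ(gₙ₊₁ b, g b)`. So `(Fₙ)` is uniformly Cauchy on compact sets.
The limit is not constant: for large `N` the limit `H` of the tail compositions
`(g_{N+1} ∘ ⋯ ∘ g_{N+m}) ∘ g⁻ᵐ` nearly fixes `a` and `b`, and the limit of `(Fₙ)` is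
`G_N ∘ H ∘ g⁻ᴺ`.
-/

open ComplexConjugate Topology

lemma mem_unitDisc {z : ℂ} : z ∈ unitDisc ↔ ‖z‖ < 1 := Iff.rfl

lemma unitDisc_eq_ball : unitDisc = ball (0 : ℂ) 1 := by
  ext z; simp [unitDisc]

lemma isOpen_unitDisc : IsOpen unitDisc := unitDisc_eq_ball ▸ isOpen_ball

lemma isPreconnected_unitDisc : IsPreconnected unitDisc :=
  unitDisc_eq_ball ▸ (convex_ball _ _).isPreconnected

lemma zero_mem_unitDisc : (0 : ℂ) ∈ unitDisc := by simp [unitDisc]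

def NonconstOn (f : ℂ → ℂ) (U : Set ℂ) : Prop := ∃ z ∈ U, ∃ w ∈ U, f z ≠ f w

lemma Set.InjOn.nonconstOn_unitDisc {f : ℂ → ℂ} (hf : InjOn f unitDisc) :
    NonconstOn f unitDisc :=
  ⟨0, zero_mem_unitDisc, 1 / 2, by norm_num [unitDisc],
    hf.ne zero_mem_unitDisc (by norm_num [unitDisc]) (by norm_num)⟩

noncomputable def pseudoHypDist (z w : ℂ) : ℝ := ‖(z - w) / (1 - conj w * z)‖

noncomputable def mobius (a z : ℂ) : ℂ := (z - a) / (1 - conj a * z)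

/-- `tanh (artanh s + artanh t)`: the pseudo-hyperbolic distance adds up this way along a
geodesic through `0`. -/
noncomputable def pseudoHypAdd (s t : ℝ) : ℝ := (s + t) / (1 + s * t)

section PseudoHypDist

variable {a z w : ℂ}

lemma one_sub_norm_mul_le_norm (z w : ℂ) : 1 - ‖w‖ * ‖z‖ ≤ ‖1 - conj w * z‖ := by
  simpa using norm_sub_norm_le (1 : ℂ) (conj w * z)

lemma norm_one_sub_conj_mul_le (z w : ℂ) : ‖1 - conj w * z‖ ≤ 1 + ‖w‖ * ‖z‖ := by
  simpa using norm_sub_le (1 : ℂ) (conj w * z)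

lemma one_sub_conj_mul_ne_zero (h : ‖w‖ * ‖z‖ < 1) : 1 - conj w * z ≠ 0 :=
  norm_pos_iff.1 <| (sub_pos.2 h).trans_le (one_sub_norm_mul_le_norm z w)

lemma norm_mul_lt_one (hz : z ∈ unitDisc) (hw : w ∈ unitDisc) : ‖w‖ * ‖z‖ < 1 :=
  mul_lt_one_of_nonneg_of_lt_one_left (norm_nonneg w) hw hz.le

lemma normSq_one_sub_conj_mul_sub_normSq_sub (z w : ℂ) :
    normSq (1 - conj w * z) - normSq (z - w) = (1 - normSq z) * (1 - normSq w) := by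
  simp only [normSq_apply, sub_re, sub_im, mul_re, mul_im, one_re, one_im, conj_re, conj_im]
  ring

lemma pseudoHypDist_eq_div (z w : ℂ) :
    pseudoHypDist z w = ‖z - w‖ / ‖1 - conj w * z‖ := norm_div _ _

lemma pseudoHypDist_nonneg (z w : ℂ) : 0 ≤ pseudoHypDist z w := norm_nonneg _

@[simp] lemma pseudoHypDist_self (z : ℂ) : pseudoHypDist z z = 0 := by simp [pseudoHypDist]

@[simp] lemma pseudoHypDist_zero_right (z : ℂ) : pseudoHypDist z 0 = ‖z‖ := by
  simp [pseudoHypDist]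

lemma norm_mobius (a z : ℂ) : ‖mobius a z‖ = pseudoHypDist z a := rfl

lemma pseudoHypDist_comm (z w : ℂ) : pseudoHypDist z w = pseudoHypDist w z := by
  have h : ‖1 - conj z * w‖ = ‖1 - conj w * z‖ := by
    rw [← norm_conj (1 - conj w * z)]; simp [mul_comm]
  rw [pseudoHypDist_eq_div, pseudoHypDist_eq_div, h, norm_sub_rev]

lemma pseudoHypDist_lt_one (hz : z ∈ unitDisc) (hw : w ∈ unitDisc) : pseudoHypDist z w < 1 := by
  have hz2 : normSq z < 1 := by rw [← Complex.sq_norm]; nlinarith [norm_nonneg z, mem_unitDisc.1 hz]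
  have hw2 : normSq w < 1 := by rw [← Complex.sq_norm]; nlinarith [norm_nonneg w, mem_unitDisc.1 hw]
  have hsq : ‖z - w‖ ^ 2 < ‖1 - conj w * z‖ ^ 2 := by
    rw [Complex.sq_norm, Complex.sq_norm]
    nlinarith [normSq_one_sub_conj_mul_sub_normSq_sub z w]
  rw [pseudoHypDist_eq_div, div_lt_one (norm_pos_iff.2 (one_sub_conj_mul_ne_zero
    (norm_mul_lt_one hz hw)))]
  exact pow_lt_pow_iff_left₀ (norm_nonneg _) (norm_nonneg _) two_ne_zero |>.1 hsq

lemma mobius_mem (ha : a ∈ unitDisc) (hz : z ∈ unitDisc) : mobius a z ∈ unitDisc :=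
  pseudoHypDist_lt_one hz ha

lemma mapsTo_mobius (ha : a ∈ unitDisc) : MapsTo (mobius a) unitDisc unitDisc :=
  fun _ hz => mobius_mem ha hz

@[simp] lemma mobius_self (a : ℂ) : mobius a a = 0 := by simp [mobius]

@[simp] lemma mobius_zero (a : ℂ) : mobius a 0 = -a := by simp [mobius]

lemma mobius_ne_zero (ha : a ∈ unitDisc) (hz : z ∈ unitDisc) (hza : z ≠ a) : mobius a z ≠ 0 :=
  div_ne_zero (sub_ne_zero.2 hza) (one_sub_conj_mul_ne_zero (norm_mul_lt_one hz ha))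

lemma differentiableOn_mobius (ha : a ∈ unitDisc) : DifferentiableOn ℂ (mobius a) unitDisc :=
  ((differentiable_id.sub_const a).differentiableOn).div
    ((differentiable_const _).mul differentiable_id |>.const_sub 1).differentiableOn
    fun _ hz => one_sub_conj_mul_ne_zero (norm_mul_lt_one hz ha)

lemma mobius_neg_mobius (ha : a ∈ unitDisc) (hz : z ∈ unitDisc) :
    mobius (-a) (mobius a z) = z := by
  have h1 := one_sub_conj_mul_ne_zero (norm_mul_lt_one hz ha)
  have h2 := one_sub_conj_mul_ne_zero (norm_mul_lt_one ha ha)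
  have hnum : mobius a z - -a = z * (1 - conj a * a) / (1 - conj a * z) := by
    rw [mobius, eq_div_iff h1, div_sub' h1, div_mul_cancel₀ _ h1]; ring
  have hden : 1 - conj (-a) * mobius a z = (1 - conj a * a) / (1 - conj a * z) := by
    rw [mobius, eq_div_iff h1, map_neg, neg_mul, sub_neg_eq_add, add_mul, one_mul,
      mul_assoc, div_mul_cancel₀ _ h1]; ring
  rw [mobius, hnum, hden, div_div_div_cancel_right₀ h1, mul_div_cancel_right₀ _ h2]

lemma pseudoHypDist_mobius (ha : a ∈ unitDisc) (hz : z ∈ unitDisc) (hw : w ∈ unitDisc) :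
    pseudoHypDist (mobius a z) (mobius a w) = pseudoHypDist z w := by
  have h1 := one_sub_conj_mul_ne_zero (norm_mul_lt_one hz ha)
  have h2 := one_sub_conj_mul_ne_zero (norm_mul_lt_one hw ha)
  have h3 := one_sub_conj_mul_ne_zero (norm_mul_lt_one ha ha)
  have h4 := one_sub_conj_mul_ne_zero (norm_mul_lt_one hz hw)
  have h5 : 1 - a * conj w ≠ 0 := by
    rw [← map_ne_zero (starRingEnd ℂ)]; simpa [mul_comm] using h2
  have hnum : mobius a z - mobius a w
      = (z - w) * (1 - conj a * a) / ((1 - conj a * z) * (1 - conj a * w)) := by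
    rw [mobius, mobius, div_sub_div _ _ h1 h2]; ring
  have hden : 1 - conj (mobius a w) * mobius a z
      = (1 - conj a * a) * (1 - conj w * z) / ((1 - a * conj w) * (1 - conj a * z)) := by
    have hcw : conj (mobius a w) = (conj w - conj a) / (1 - a * conj w) := by
      simp [mobius, mul_comm]
    rw [hcw, mobius, div_mul_div_comm, one_sub_div (mul_ne_zero h5 h1)]
    ring
  have key : (mobius a z - mobius a w) / (1 - conj (mobius a w) * mobius a z)
      = (z - w) / (1 - conj w * z) * ((1 - a * conj w) / (1 - conj a * w)) := by
    have h1' : 1 - z * conj a ≠ 0 := by rwa [mul_comm]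
    have h2' : 1 - w * conj a ≠ 0 := by rwa [mul_comm]
    have h4' : 1 - z * conj w ≠ 0 := by rwa [mul_comm]
    rw [hnum, hden]
    field_simp
  have hunit : ‖(1 - a * conj w) / (1 - conj a * w)‖ = 1 := by
    rw [norm_div, div_eq_one_iff_eq (norm_ne_zero_iff.2 h2), ← norm_conj]
    simp [mul_comm]
  rw [pseudoHypDist, key, norm_mul, hunit, mul_one, pseudoHypDist]

end PseudoHypDist

section PseudoHypAdd

variable {s t s' t' : ℝ}

lemma pseudoHypAdd_nonneg (hs : 0 ≤ s) (ht : 0 ≤ t) : 0 ≤ pseudoHypAdd s t :=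
  div_nonneg (by linarith) (by nlinarith)

lemma pseudoHypAdd_lt_one (hs : 0 ≤ s) (hs1 : s < 1) (ht : 0 ≤ t) (ht1 : t < 1) :
    pseudoHypAdd s t < 1 := by
  rw [pseudoHypAdd, div_lt_one (by nlinarith)]
  nlinarith

lemma pseudoHypAdd_le_pseudoHypAdd (hs : 0 ≤ s) (ht : 0 ≤ t) (hss : s ≤ s') (htt : t ≤ t')
    (hs1 : s' ≤ 1) (ht1 : t' ≤ 1) : pseudoHypAdd s t ≤ pseudoHypAdd s' t' := by
  rw [pseudoHypAdd, pseudoHypAdd, div_le_div_iff₀ (by nlinarith) (by nlinarith)]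
  nlinarith [mul_nonneg (sub_nonneg.2 hss) (by nlinarith : (0 : ℝ) ≤ 1 - t * t'),
    mul_nonneg (sub_nonneg.2 htt) (by nlinarith : (0 : ℝ) ≤ 1 - s' * s)]

lemma pseudoHypAdd_le_add (hs : 0 ≤ s) (ht : 0 ≤ t) : pseudoHypAdd s t ≤ s + t :=
  div_le_self (by linarith) (by nlinarith)

end PseudoHypAdd

section PseudoHypDist

variable {z w v : ℂ}

lemma pseudoHypDist_le_pseudoHypAdd (hz : z ∈ unitDisc) (hw : w ∈ unitDisc) :
    pseudoHypDist z w ≤ pseudoHypAdd ‖z‖ ‖w‖ := by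
  set s := ‖z‖
  set t := ‖w‖
  have hs0 : 0 ≤ s := norm_nonneg z
  have ht0 : 0 ≤ t := norm_nonneg w
  have hs1 : s < 1 := hz
  have ht1 : t < 1 := hw
  have hx : -(t * s) ≤ (conj w * z).re := by
    have := abs_re_le_norm (conj w * z)
    rw [norm_mul, norm_conj] at this
    linarith [neg_abs_le (conj w * z).re]
  have hnum : normSq (z - w) = s ^ 2 + t ^ 2 - 2 * (conj w * z).re := by
    rw [normSq_sub, ← Complex.sq_norm, ← Complex.sq_norm, mul_comm z]
  have hden : normSq (1 - conj w * z) = 1 + s ^ 2 * t ^ 2 - 2 * (conj w * z).re := by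
    have := normSq_one_sub_conj_mul_sub_normSq_sub z w
    rw [← Complex.sq_norm z, ← Complex.sq_norm w] at this
    linarith
  -- the difference of the squared sides is `2 (1 - s²) (1 - t²) (s t + Re (conj w * z))`
  have hsq : (‖z - w‖ * (1 + s * t)) ^ 2 ≤ ((s + t) * ‖1 - conj w * z‖) ^ 2 := by
    rw [mul_pow, mul_pow, Complex.sq_norm, Complex.sq_norm, hnum, hden]
    nlinarith [mul_nonneg (by linarith : (0 : ℝ) ≤ (conj w * z).re + t * s)
      (mul_nonneg (by nlinarith : (0 : ℝ) ≤ 1 - s ^ 2) (by nlinarith : (0 : ℝ) ≤ 1 - t ^ 2))]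
  have hle : ‖z - w‖ * (1 + s * t) ≤ (s + t) * ‖1 - conj w * z‖ :=
    pow_le_pow_iff_left₀ (by positivity) (by positivity) two_ne_zero |>.1 hsq
  rw [pseudoHypDist_eq_div, pseudoHypAdd, div_le_div_iff₀ (norm_pos_iff.2
    (one_sub_conj_mul_ne_zero (norm_mul_lt_one hz hw))) (by positivity)]
  exact hle

lemma pseudoHypDist_le_pseudoHypAdd_of_le {r : ℝ} (hz : z ∈ unitDisc) (hw : w ∈ unitDisc)
    (hzr : ‖z‖ ≤ r) (hr : r ≤ 1) : pseudoHypDist z w ≤ pseudoHypAdd r ‖w‖ :=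
  (pseudoHypDist_le_pseudoHypAdd hz hw).trans <| pseudoHypAdd_le_pseudoHypAdd (norm_nonneg _)
    (norm_nonneg _) hzr le_rfl hr hw.le

lemma pseudoHypDist_triangle (hz : z ∈ unitDisc) (hv : v ∈ unitDisc) (hw : w ∈ unitDisc) :
    pseudoHypDist z w ≤ pseudoHypDist z v + pseudoHypDist v w := by
  rw [← pseudoHypDist_mobius hv hz hw, pseudoHypDist_comm v w, ← norm_mobius, ← norm_mobius]
  exact (pseudoHypDist_le_pseudoHypAdd (mobius_mem hv hz) (mobius_mem hv hw)).trans
    (pseudoHypAdd_le_add (norm_nonneg _) (norm_nonneg _))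

lemma norm_le_pseudoHypAdd (hz : z ∈ unitDisc) (hw : w ∈ unitDisc) :
    ‖z‖ ≤ pseudoHypAdd (pseudoHypDist z w) ‖w‖ := by
  have hw' : -w ∈ unitDisc := by simpa [mem_unitDisc] using hw
  calc ‖z‖ = pseudoHypDist (mobius w z) (-w) := by rw [← norm_mobius, mobius_neg_mobius hw hz]
    _ ≤ pseudoHypAdd (pseudoHypDist z w) ‖w‖ := by
      simpa [norm_mobius] using pseudoHypDist_le_pseudoHypAdd (mobius_mem hw hz) hw'

lemma pseudoHypDist_le_hdist (hz : z ∈ unitDisc) (hw : w ∈ unitDisc) :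
    pseudoHypDist z w ≤ hdist z w := by
  set t := pseudoHypDist z w
  have ht0 : 0 ≤ t := pseudoHypDist_nonneg z w
  have ht1 : t < 1 := pseudoHypDist_lt_one hz hw
  have hexp : Real.exp t ≤ (1 + t) / (1 - t) := by
    rw [le_div_iff₀ (by linarith)]
    calc Real.exp t * (1 - t) ≤ Real.exp t * Real.exp (-t) := by
          gcongr; linarith [Real.add_one_le_exp (-t)]
      _ ≤ 1 + t := by rw [← Real.exp_add, add_neg_cancel, Real.exp_zero]; linarith
  calc t = Real.log (Real.exp t) := (Real.log_exp t).symm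
    _ ≤ Real.log ((1 + t) / (1 - t)) := Real.log_le_log (Real.exp_pos t) hexp
    _ = hdist z w := by show _ = 2 * ((1 / 2) * Real.log ((1 + t) / (1 - t))); ring

lemma norm_sub_eq_pseudoHypDist_mul (hz : z ∈ unitDisc) (hw : w ∈ unitDisc) :
    ‖z - w‖ = pseudoHypDist z w * ‖1 - conj w * z‖ := by
  rw [pseudoHypDist_eq_div, div_mul_cancel₀]
  exact norm_ne_zero_iff.2 (one_sub_conj_mul_ne_zero (norm_mul_lt_one hz hw))

lemma dist_le_two_mul_pseudoHypDist (hz : z ∈ unitDisc) (hw : w ∈ unitDisc) :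
    dist z w ≤ 2 * pseudoHypDist z w := by
  have hden : ‖1 - conj w * z‖ ≤ 2 := (norm_one_sub_conj_mul_le z w).trans <| by
    nlinarith [norm_nonneg z, norm_nonneg w, mem_unitDisc.1 hz, mem_unitDisc.1 hw]
  rw [dist_eq_norm, norm_sub_eq_pseudoHypDist_mul hz hw, mul_comm 2]
  exact mul_le_mul_of_nonneg_left hden (pseudoHypDist_nonneg z w)

lemma pseudoHypDist_le_norm_sub_div {r : ℝ} (hr : ‖w‖ * ‖z‖ ≤ r) (hr1 : r < 1) :
    pseudoHypDist z w ≤ ‖z - w‖ / (1 - r) := by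
  rw [pseudoHypDist_eq_div]
  exact div_le_div_of_nonneg_left (norm_nonneg _) (by linarith)
    ((sub_le_sub_left hr 1).trans (one_sub_norm_mul_le_norm z w))

end PseudoHypDist

section SchwarzPick

variable {f : ℂ → ℂ} {z w : ℂ}

theorem pseudoHypDist_map_le (hf : DifferentiableOn ℂ f unitDisc)
    (hm : MapsTo f unitDisc unitDisc) (hz : z ∈ unitDisc) (hw : w ∈ unitDisc) :
    pseudoHypDist (f z) (f w) ≤ pseudoHypDist z w := by
  have hw' : -w ∈ unitDisc := by simpa [mem_unitDisc] using hw
  set φ : ℂ → ℂ := fun u => mobius (f w) (f (mobius (-w) u))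
  have hφd : DifferentiableOn ℂ φ (ball 0 1) := unitDisc_eq_ball ▸
    (differentiableOn_mobius (hm hw)).comp (hf.comp (differentiableOn_mobius hw')
      (mapsTo_mobius hw')) (hm.comp (mapsTo_mobius hw'))
  have hφm : MapsTo φ (ball 0 1) (closedBall 0 1) := unitDisc_eq_ball ▸
    ((mapsTo_mobius (hm hw)).comp (hm.comp (mapsTo_mobius hw'))).mono_right
      (unitDisc_eq_ball ▸ ball_subset_closedBall)
  have hφ0 : φ 0 = 0 := by simp [φ]
  simpa [φ, mobius_neg_mobius hw hz, norm_mobius] using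
    Complex.norm_le_norm_of_mapsTo_ball hφd hφm hφ0 (mobius_mem hw hz)

theorem norm_sub_le_of_mapsTo_closedBall (hf : DifferentiableOn ℂ f unitDisc)
    (hb : MapsTo f unitDisc (closedBall 0 1)) (hz : z ∈ unitDisc) (hw : w ∈ unitDisc) :
    ‖f z - f w‖ ≤ pseudoHypDist z w * ‖1 - conj (f w) * f z‖ := by
  by_cases hm : MapsTo f unitDisc unitDisc
  · rw [norm_sub_eq_pseudoHypDist_mul (hm hz) (hm hw)]
    exact mul_le_mul_of_nonneg_right (pseudoHypDist_map_le hf hm hz hw) (norm_nonneg _)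
  · -- `f` attains its maximal modulus `1` inside the disc, so it is constant
    obtain ⟨u, hu, hfu⟩ := not_forall₂.1 hm
    have hmax : IsMaxOn (norm ∘ f) unitDisc u := fun v hv => by
      have h1 : ‖f v‖ ≤ 1 := by simpa using hb hv
      have h2 : 1 ≤ ‖f u‖ := not_lt.1 hfu
      exact h1.trans h2
    have hconst := Complex.eqOn_of_isPreconnected_of_isMaxOn_norm isPreconnected_unitDisc
      isOpen_unitDisc hf hu hmax
    simp only [hconst hz, hconst hw, Function.const_apply, sub_self, norm_zero]
    exact mul_nonneg (pseudoHypDist_nonneg z w) (norm_nonneg _)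

theorem norm_one_sub_le_of_mapsTo_closedBall {b : ℂ} {ρ : ℝ} (hf : DifferentiableOn ℂ f unitDisc)
    (hm : MapsTo f unitDisc (closedBall 0 1)) (hz : z ∈ unitDisc) (hb : b ∈ unitDisc)
    (hρ : pseudoHypDist z b ≤ ρ) (hρ1 : ρ < 1) :
    ‖1 - f z‖ ≤ (1 + ρ) / (1 - ρ) * ‖1 - f b‖ := by
  have hfz : ‖f z‖ ≤ 1 := by simpa using hm hz
  have hden : ‖1 - conj (f b) * f z‖ ≤ ‖1 - f b‖ + ‖1 - f z‖ := by
    have hconj : ‖1 - conj (f b)‖ = ‖1 - f b‖ := by rw [← norm_conj]; simp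
    calc ‖1 - conj (f b) * f z‖ = ‖(1 - f z) + f z * (1 - conj (f b))‖ := by ring_nf
      _ ≤ ‖1 - f z‖ + ‖f z‖ * ‖1 - f b‖ := by rw [← hconj, ← norm_mul]; exact norm_add_le _ _
      _ ≤ ‖1 - f b‖ + ‖1 - f z‖ := by nlinarith [norm_nonneg (1 - f b)]
  have hsp := norm_sub_le_of_mapsTo_closedBall hf hm hz hb
  have hchain : ‖1 - f z‖ ≤ ‖1 - f b‖ + ρ * (‖1 - f b‖ + ‖1 - f z‖) :=
    calc ‖1 - f z‖ ≤ ‖1 - f b‖ + ‖f z - f b‖ := by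
          simpa [norm_sub_rev (f b) (f z)] using norm_add_le (1 - f b) (f b - f z)
      _ ≤ ‖1 - f b‖ + ρ * (‖1 - f b‖ + ‖1 - f z‖) := by
          gcongr
          exact hsp.trans (mul_le_mul hρ hden (norm_nonneg _) ((pseudoHypDist_nonneg _ _).trans hρ))
  rw [div_mul_eq_mul_div, le_div_iff₀ (by linarith)]
  nlinarith

end SchwarzPick

noncomputable def twoPointDisplacement (f : ℂ → ℂ) (a b : ℂ) : ℝ :=
  pseudoHypDist (f a) a + pseudoHypDist (f b) b

lemma twoPointDisplacement_nonneg (f : ℂ → ℂ) (a b : ℂ) : 0 ≤ twoPointDisplacement f a b :=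
  add_nonneg (pseudoHypDist_nonneg _ _) (pseudoHypDist_nonneg _ _)

section TwoPoint

variable {f : ℂ → ℂ} {a b z : ℂ} {r : ℝ}

lemma norm_mobius_sub_le {c w : ℂ} (hc : ‖c‖ ≤ 1 / 2) (hw : ‖w‖ ≤ 1) :
    ‖mobius c w - w‖ ≤ 4 * ‖c‖ := by
  have hcw : ‖c‖ * ‖w‖ ≤ ‖c‖ := mul_le_of_le_one_right (norm_nonneg c) hw
  have hden : 1 - ‖c‖ ≤ ‖1 - conj c * w‖ :=
    (sub_le_sub_left hcw 1).trans (one_sub_norm_mul_le_norm w c)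
  have hden0 : 1 - conj c * w ≠ 0 := norm_pos_iff.1 (by linarith)
  have hnum : ‖conj c * w ^ 2 - c‖ ≤ 2 * ‖c‖ := by
    refine (norm_sub_le _ _).trans ?_
    rw [norm_mul, norm_conj, norm_pow]
    nlinarith [pow_le_one₀ (norm_nonneg w) hw (n := 2), norm_nonneg c]
  have hid : mobius c w - w = (conj c * w ^ 2 - c) / (1 - conj c * w) := by
    rw [mobius, div_sub' hden0]; ring
  rw [hid, norm_div]
  calc ‖conj c * w ^ 2 - c‖ / ‖1 - conj c * w‖ ≤ 2 * ‖c‖ / (1 - ‖c‖) :=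
        div_le_div₀ (by positivity) hnum (by linarith) hden
    _ ≤ 4 * ‖c‖ := by rw [div_le_iff₀ (by linarith)]; nlinarith [norm_nonneg c]

theorem norm_apply_sub_le_of_map_zero {ρ : ℝ} (hf : DifferentiableOn ℂ f unitDisc)
    (hm : MapsTo f unitDisc unitDisc) (hf0 : f 0 = 0) (hz : z ∈ unitDisc) (hb : b ∈ unitDisc)
    (hb0 : b ≠ 0) (hρ : pseudoHypDist z b ≤ ρ) (hρ1 : ρ < 1) :
    ‖f z - z‖ ≤ (1 + ρ) / (1 - ρ) * (‖f b - b‖ / ‖b‖) := by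
  set ψ := dslope f 0
  have hfψ : ∀ u, f u = u * ψ u := fun u => by
    simpa [hf0, smul_eq_mul] using (sub_smul_dslope f 0 u).symm
  have hψd : DifferentiableOn ℂ ψ unitDisc :=
    (differentiableOn_dslope (isOpen_unitDisc.mem_nhds zero_mem_unitDisc)).2 hf
  have hψm : MapsTo ψ unitDisc (closedBall 0 1) := fun u hu => by
    have hmb : MapsTo f (ball 0 1) (closedBall (f 0) 1) := by
      rw [hf0, ← unitDisc_eq_ball]; exact hm.mono_right (unitDisc_eq_ball ▸ ball_subset_closedBall)
    simpa using Complex.norm_dslope_le_div_of_mapsTo_ball (unitDisc_eq_ball ▸ hf) hmb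
      (unitDisc_eq_ball ▸ hu)
  have hψb : ‖1 - ψ b‖ = ‖f b - b‖ / ‖b‖ := by
    rw [eq_div_iff (norm_ne_zero_iff.2 hb0), ← norm_mul, hfψ b, norm_sub_rev]; ring_nf
  calc ‖f z - z‖ = ‖z‖ * ‖1 - ψ z‖ := by rw [hfψ z, ← norm_mul, norm_sub_rev]; ring_nf
    _ ≤ ‖1 - ψ z‖ := mul_le_of_le_one_left (norm_nonneg _) hz.le
    _ ≤ (1 + ρ) / (1 - ρ) * (‖f b - b‖ / ‖b‖) :=
      hψb ▸ norm_one_sub_le_of_mapsTo_closedBall hψd hψm hz hb hρ hρ1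

/-- In the constant, `pseudoHypAdd r ‖b‖` bounds the pseudo-hyperbolic distance from `b` to the
points of norm at most `r`. -/
theorem pseudoHypDist_apply_self_le_of_norm_le_half (hf : DifferentiableOn ℂ f unitDisc)
    (hm : MapsTo f unitDisc unitDisc) (hα : ‖f 0‖ ≤ 1 / 2) (hb : b ∈ unitDisc) (hb0 : b ≠ 0)
    (hz : z ∈ unitDisc) (hr0 : 0 ≤ r) (hzr : ‖z‖ ≤ r) (hr1 : r < 1) :
    pseudoHypDist (f z) z ≤ (4 + 4 * ((1 + pseudoHypAdd r ‖b‖) / (1 - pseudoHypAdd r ‖b‖) / ‖b‖))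
      / (1 - r) * twoPointDisplacement f 0 b := by
  set ρ := pseudoHypAdd r ‖b‖
  have hρ0 : 0 ≤ ρ := pseudoHypAdd_nonneg hr0 (norm_nonneg b)
  have hρ1 : ρ < 1 := pseudoHypAdd_lt_one hr0 hr1 (norm_nonneg b) hb
  set K := (1 + ρ) / (1 - ρ) / ‖b‖
  have hK : 0 ≤ K := by positivity
  set α := ‖f 0‖
  set β := pseudoHypDist (f b) b
  have hdisp : twoPointDisplacement f 0 b = α + β := by simp [twoPointDisplacement, α, β]
  set φ := fun u => mobius (f 0) (f u)
  have hφd : DifferentiableOn ℂ φ unitDisc :=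
    (differentiableOn_mobius (hm zero_mem_unitDisc)).comp hf hm
  have hφm : MapsTo φ unitDisc unitDisc := (mapsTo_mobius (hm zero_mem_unitDisc)).comp hm
  have hφ0 : φ 0 = 0 := mobius_self _
  have hφz : ‖φ z‖ ≤ r := by
    have h := pseudoHypDist_map_le hφd hφm hz zero_mem_unitDisc
    rw [hφ0, pseudoHypDist_zero_right, pseudoHypDist_zero_right] at h
    exact h.trans hzr
  have hφ : ∀ w ∈ unitDisc, ‖f w - φ w‖ ≤ 4 * α := fun w hw => by
    rw [norm_sub_rev]; exact norm_mobius_sub_le hα (hm hw).le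
  have hφb : ‖φ b - b‖ ≤ 4 * α + 2 * β := by
    calc ‖φ b - b‖ ≤ ‖f b - φ b‖ + ‖f b - b‖ := by
          simpa [norm_sub_rev (φ b)] using norm_sub_le_norm_sub_add_norm_sub (φ b) (f b) b
      _ ≤ 4 * α + 2 * β := add_le_add (hφ b hb)
          (by simpa [dist_eq_norm] using dist_le_two_mul_pseudoHypDist (hm hb) hb)
  have h1 : pseudoHypDist (f z) (φ z) ≤ 4 * α / (1 - r) :=
    (pseudoHypDist_le_norm_sub_div
      ((mul_le_of_le_one_right (norm_nonneg _) (hm hz).le).trans hφz) hr1).trans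
      (div_le_div_of_nonneg_right (hφ z hz) (by linarith))
  have h2 : pseudoHypDist (φ z) z ≤ K * (4 * α + 2 * β) / (1 - r) := by
    refine (pseudoHypDist_le_norm_sub_div
      ((mul_le_of_le_one_right (norm_nonneg _) (hφm hz).le).trans hzr) hr1).trans
      (div_le_div_of_nonneg_right ?_ (by linarith))
    calc ‖φ z - z‖ ≤ (1 + ρ) / (1 - ρ) * (‖φ b - b‖ / ‖b‖) :=
          norm_apply_sub_le_of_map_zero hφd hφm hφ0 hz hb hb0
            (pseudoHypDist_le_pseudoHypAdd_of_le hz hb hzr hr1.le) hρ1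
      _ ≤ K * (4 * α + 2 * β) := by
          rw [mul_div_assoc', mul_div_right_comm]; exact mul_le_mul_of_nonneg_left hφb hK
  calc pseudoHypDist (f z) z ≤ pseudoHypDist (f z) (φ z) + pseudoHypDist (φ z) z :=
        pseudoHypDist_triangle (hm hz) (hφm hz) hz
    _ ≤ (4 + 4 * K) / (1 - r) * twoPointDisplacement f 0 b := by
        rw [hdisp, div_mul_eq_mul_div]
        refine (add_le_add h1 h2).trans_eq (add_div _ _ _).symm |>.trans ?_
        gcongr
        nlinarith [norm_nonneg (f 0), pseudoHypDist_nonneg (f b) b]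

theorem exists_pseudoHypDist_apply_self_le_of_zero (hb : b ∈ unitDisc) (hb0 : b ≠ 0)
    (hr0 : 0 ≤ r) (hr1 : r < 1) :
    ∃ C, 0 ≤ C ∧ ∀ f : ℂ → ℂ, DifferentiableOn ℂ f unitDisc → MapsTo f unitDisc unitDisc →
      ∀ z ∈ unitDisc, ‖z‖ ≤ r → pseudoHypDist (f z) z ≤ C * twoPointDisplacement f 0 b := by
  set C₀ := (4 + 4 * ((1 + pseudoHypAdd r ‖b‖) / (1 - pseudoHypAdd r ‖b‖) / ‖b‖)) / (1 - r)
  refine ⟨max 2 C₀, le_max_of_le_left zero_le_two, fun f hf hm z hz hzr => ?_⟩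
  have hdisp := twoPointDisplacement_nonneg f 0 b
  rcases lt_or_ge (1 / 2) ‖f 0‖ with hα | hα
  · calc pseudoHypDist (f z) z ≤ 2 * twoPointDisplacement f 0 b := by
          simp only [twoPointDisplacement, pseudoHypDist_zero_right]
          linarith [pseudoHypDist_lt_one (hm hz) hz, pseudoHypDist_nonneg (f b) b]
      _ ≤ _ := mul_le_mul_of_nonneg_right (le_max_left _ _) hdisp
  · exact (pseudoHypDist_apply_self_le_of_norm_le_half hf hm hα hb hb0 hz hr0 hzr hr1).trans
      (mul_le_mul_of_nonneg_right (le_max_right _ _) hdisp)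

theorem exists_pseudoHypDist_apply_self_le (ha : a ∈ unitDisc) (hb : b ∈ unitDisc) (hab : a ≠ b)
    (hr0 : 0 ≤ r) (hr1 : r < 1) :
    ∃ C, 0 ≤ C ∧ ∀ f : ℂ → ℂ, DifferentiableOn ℂ f unitDisc → MapsTo f unitDisc unitDisc →
      ∀ z ∈ unitDisc, ‖z‖ ≤ r → pseudoHypDist (f z) z ≤ C * twoPointDisplacement f a b := by
  have ha' : -a ∈ unitDisc := by simpa [mem_unitDisc] using ha
  obtain ⟨C, hC0, hC⟩ := exists_pseudoHypDist_apply_self_le_of_zero (mobius_mem ha hb)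
    (mobius_ne_zero ha hb hab.symm) (pseudoHypAdd_nonneg hr0 (norm_nonneg a))
    (pseudoHypAdd_lt_one hr0 hr1 (norm_nonneg a) ha)
  refine ⟨C, hC0, fun f hf hm z hz hzr => ?_⟩
  -- conjugate `f` by the automorphism `mobius a`, which sends `a` to `0`
  set f' := fun u => mobius a (f (mobius (-a) u))
  have hf'd : DifferentiableOn ℂ f' unitDisc := (differentiableOn_mobius ha).comp
    (hf.comp (differentiableOn_mobius ha') (mapsTo_mobius ha')) (hm.comp (mapsTo_mobius ha'))
  have hf'm : MapsTo f' unitDisc unitDisc := (mapsTo_mobius ha).comp (hm.comp (mapsTo_mobius ha'))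
  have hconj : ∀ u ∈ unitDisc,
      pseudoHypDist (f' (mobius a u)) (mobius a u) = pseudoHypDist (f u) u := fun u hu => by
    simp only [f', mobius_neg_mobius ha hu]
    exact pseudoHypDist_mobius ha (hm hu) hu
  have hdisp : twoPointDisplacement f' 0 (mobius a b) = twoPointDisplacement f a b := by
    rw [twoPointDisplacement, ← mobius_self a, hconj a ha, hconj b hb, twoPointDisplacement]
  rw [← hconj z hz, ← hdisp]
  exact hC f' hf'd hf'm _ (mobius_mem ha hz) (pseudoHypDist_le_pseudoHypAdd_of_le hz ha hzr hr1.le)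

end TwoPoint

section Inverse

variable {U V : Set ℂ} {g ginv : ℂ → ℂ}

lemma Set.InjOn.not_eventually_eq {s : ℂ} (hinj : InjOn g U) (hU : U ∈ 𝓝 s) :
    ¬ ∀ᶠ w in 𝓝 s, g w = g s := fun h => by
  obtain ⟨w, ⟨hgw, hwU⟩, hws⟩ :=
    (((h.and hU).filter_mono nhdsWithin_le_nhds).and (self_mem_nhdsWithin (s := {s}ᶜ))).exists
  exact hws (hinj hwU (mem_of_mem_nhds hU) hgw)

lemma Set.InjOn.eventually_deriv_ne_zero (hinj : InjOn g U) (hU : IsOpen U)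
    (hg : DifferentiableOn ℂ g U) {s : ℂ} (hs : s ∈ U) : ∀ᶠ w in 𝓝[≠] s, deriv g w ≠ 0 := by
  refine ((hg.analyticOnNhd hU).deriv s hs).eventually_eq_zero_or_eventually_ne_zero.resolve_left
    fun h0 => hinj.not_eventually_eq (hU.mem_nhds hs) ?_
  obtain ⟨ε, hε, hball⟩ := Metric.eventually_nhds_iff_ball.1 (h0.and (hU.mem_nhds hs))
  filter_upwards [ball_mem_nhds s hε] with w hw
  exact isOpen_ball.is_const_of_deriv_eq_zero (convex_ball s ε).isPreconnected
    (fun y hy => ((hg y (hball y hy).2).differentiableAt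
      (hU.mem_nhds (hball y hy).2)).differentiableWithinAt)
    (fun y hy => (hball y hy).1) hw (mem_ball_self hε)

lemma continuousAt_of_invOn (hU : IsOpen U) (hg : DifferentiableOn ℂ g U)
    (hmaps : MapsTo ginv V U) (hinv : InvOn ginv g U V) : ∀ x ∈ V, ContinuousAt ginv x := by
  intro x hx
  have hopen : 𝓝 (g (ginv x)) ≤ map g (𝓝 (ginv x)) :=
    ((hg.analyticAt (hU.mem_nhds (hmaps hx))).eventually_constant_or_nhds_le_map_nhds).resolve_left
      (hinv.1.injOn.not_eventually_eq (hU.mem_nhds (hmaps hx)))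
  rw [hinv.2 hx] at hopen
  rw [ContinuousAt, tendsto_def]
  intro W hW
  filter_upwards [hopen (image_mem_map (inter_mem hW (hU.mem_nhds (hmaps hx))))]
  rintro _ ⟨v, ⟨hvW, hvU⟩, rfl⟩
  rwa [mem_preimage, hinv.1 hvU]

/-- At the critical points of `g`, which are isolated, this follows from the removable singularity
theorem. -/
theorem DifferentiableOn.of_invOn (hU : IsOpen U) (hV : IsOpen V) (hg : DifferentiableOn ℂ g U)
    (hmaps : MapsTo ginv V U) (hinv : InvOn ginv g U V) : DifferentiableOn ℂ ginv V := by
  have hcont := continuousAt_of_invOn hU hg hmaps hinv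
  intro x hx
  have hlim : Tendsto ginv (𝓝[≠] x) (𝓝[≠] (ginv x)) := by
    refine tendsto_nhdsWithin_of_tendsto_nhds_of_eventually_within _
      ((hcont x hx).mono_left nhdsWithin_le_nhds) ?_
    filter_upwards [self_mem_nhdsWithin, mem_nhdsWithin_of_mem_nhds (hV.mem_nhds hx)]
      with y hyx hyV hyx'
    exact hyx (by rw [mem_singleton_iff, ← hinv.2 hyV, mem_singleton_iff.1 hyx', hinv.2 hx])
  have hpunct : ∀ᶠ y in 𝓝[≠] x, DifferentiableAt ℂ ginv y := by
    filter_upwards [hlim.eventually (hinv.1.injOn.eventually_deriv_ne_zero hU hg (hmaps hx)),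
      mem_nhdsWithin_of_mem_nhds (hV.mem_nhds hx)] with y hy hyV
    have hgy := (hg _ (hmaps hyV)).differentiableAt (hU.mem_nhds (hmaps hyV))
    exact (hgy.hasDerivAt.of_local_left_inverse (hcont y hyV) hy
      (eventually_of_mem (hV.mem_nhds hyV) fun z hz => hinv.2 hz)).differentiableAt
  exact (Complex.analyticAt_of_differentiable_on_punctured_nhds_of_continuousAt hpunct
    (hcont x hx)).differentiableAt.differentiableWithinAt

end Inverse

section Nonconst

variable {U V : Set ℂ} {f h : ℂ → ℂ}

lemma NonconstOn.not_eventuallyEq_const (hU : IsPreconnected U) (hf : AnalyticOnNhd ℂ f U)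
    (hnc : NonconstOn f U) {z : ℂ} (hz : z ∈ U) (c : ℂ) : ¬ f =ᶠ[𝓝 z] fun _ => c := fun hc => by
  obtain ⟨x, hx, y, hy, hne⟩ := hnc
  have heq := hf.eqOn_of_preconnected_of_eventuallyEq analyticOnNhd_const hU hz hc
  exact hne ((heq hx).trans (heq hy).symm)

/-- By the open mapping theorem, `h` maps a neighbourhood of a point onto a neighbourhood of its
image, on which `f` would have to be constant. -/
theorem NonconstOn.comp (hUo : IsOpen U) (hU : IsPreconnected U) (hVo : IsOpen V)
    (hV : IsPreconnected V) (hf : DifferentiableOn ℂ f V) (hh : DifferentiableOn ℂ h U)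
    (hhm : MapsTo h U V) (hfnc : NonconstOn f V) (hhnc : NonconstOn h U) :
    NonconstOn (f ∘ h) U := by
  by_contra hcon
  obtain ⟨z, hz, -⟩ := id hhnc
  have hle : 𝓝 (h z) ≤ map h (𝓝 z) :=
    ((hh.analyticAt (hUo.mem_nhds hz)).eventually_constant_or_nhds_le_map_nhds).resolve_left
      (hhnc.not_eventuallyEq_const hU (hh.analyticOnNhd hUo) hz (h z))
  apply hfnc.not_eventuallyEq_const hV (hf.analyticOnNhd hVo) (hhm hz) (f (h z))
  filter_upwards [hle (image_mem_map (hUo.mem_nhds hz))]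
  rintro _ ⟨u, hu, rfl⟩
  by_contra hne
  exact hcon ⟨u, hu, z, hz, hne⟩

end Nonconst

section Compositions

variable {U : Set ℂ} {gs : ℕ → ℂ → ℂ}

lemma rightComp_add (gs : ℕ → ℂ → ℂ) (N m : ℕ) :
    rightComp gs (N + m) = rightComp gs N ∘ rightComp (fun k => gs (N + k)) m := by
  induction m with
  | zero => rfl
  | succ m ih => rw [← add_assoc, rightComp, ih]; rfl

lemma mapsTo_rightComp (hm : ∀ n, MapsTo (gs n) U U) (n : ℕ) : MapsTo (rightComp gs n) U U := by
  induction n with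
  | zero => exact mapsTo_id U
  | succ n ih => exact ih.comp (hm n)

lemma differentiableOn_rightComp (hd : ∀ n, DifferentiableOn ℂ (gs n) U)
    (hm : ∀ n, MapsTo (gs n) U U) (n : ℕ) : DifferentiableOn ℂ (rightComp gs n) U := by
  induction n with
  | zero => exact differentiableOn_id
  | succ n ih => exact ih.comp (hd n) (hm n)

lemma nonconstOn_rightComp (hd : ∀ n, DifferentiableOn ℂ (gs n) unitDisc)
    (hm : ∀ n, MapsTo (gs n) unitDisc unitDisc) (hnc : ∀ n, NonconstOn (gs n) unitDisc) (n : ℕ) :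
    NonconstOn (rightComp gs n) unitDisc := by
  induction n with
  | zero => exact injOn_id _ |>.nonconstOn_unitDisc
  | succ n ih =>
    exact ih.comp isOpen_unitDisc isPreconnected_unitDisc isOpen_unitDisc isPreconnected_unitDisc
      (differentiableOn_rightComp hd hm n) (hd n) (hm n) (hnc n)

end Compositions

theorem exists_norm_iterate_le {f : ℂ → ℂ} {p : ℂ} (hf : DifferentiableOn ℂ f unitDisc)
    (hm : MapsTo f unitDisc unitDisc) (hp : p ∈ unitDisc) (hfp : f p = p) {r : ℝ} (hr0 : 0 ≤ r)
    (hr1 : r < 1) : ∃ R, 0 ≤ R ∧ R < 1 ∧ ∀ z ∈ unitDisc, ‖z‖ ≤ r → ∀ n, ‖f^[n] z‖ ≤ R := by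
  have hs0 := pseudoHypAdd_nonneg hr0 (norm_nonneg p)
  have hs1 := pseudoHypAdd_lt_one hr0 hr1 (norm_nonneg p) hp
  refine ⟨pseudoHypAdd (pseudoHypAdd r ‖p‖) ‖p‖, pseudoHypAdd_nonneg hs0 (norm_nonneg p),
    pseudoHypAdd_lt_one hs0 hs1 (norm_nonneg p) hp, fun z hz hzr n => ?_⟩
  have hdist : pseudoHypDist (f^[n] z) p ≤ pseudoHypAdd r ‖p‖ := by
    have h := pseudoHypDist_map_le (hf.iterate hm n) (hm.iterate n) hz hp
    rw [Function.iterate_fixed hfp] at h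
    exact h.trans (pseudoHypDist_le_pseudoHypAdd_of_le hz hp hzr hr1.le)
  exact (norm_le_pseudoHypAdd (hm.iterate n hz) hp).trans (pseudoHypAdd_le_pseudoHypAdd
    (pseudoHypDist_nonneg _ _) (norm_nonneg p) hdist le_rfl hs1.le hp.le)

lemma IsCompact.exists_norm_le_of_subset_unitDisc {K : Set ℂ} (hK : IsCompact K)
    (hKD : K ⊆ unitDisc) : ∃ r, 0 ≤ r ∧ r < 1 ∧ ∀ z ∈ K, ‖z‖ ≤ r := by
  rcases K.eq_empty_or_nonempty with rfl | hne
  · exact ⟨0, le_rfl, one_pos, by simp⟩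
  obtain ⟨z₀, hz₀, hmax⟩ := hK.exists_isMaxOn hne continuous_norm.continuousOn
  exact ⟨‖z₀‖, norm_nonneg _, hKD hz₀, fun z hz => hmax hz⟩

/-- `Gₙ ∘ g⁻ⁿ`, with `gs k` standing for `g_{k+1}` and `ginv` for `g⁻¹`. -/
def normalizedRightComp (gs : ℕ → ℂ → ℂ) (ginv : ℂ → ℂ) (n : ℕ) (z : ℂ) : ℂ :=
  rightComp gs n (ginv^[n] z)

section NormalizedRightComp

variable {g ginv : ℂ → ℂ} {gs : ℕ → ℂ → ℂ}

@[simp] lemma normalizedRightComp_zero (gs : ℕ → ℂ → ℂ) (ginv : ℂ → ℂ) (z : ℂ) :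
    normalizedRightComp gs ginv 0 z = z := rfl

lemma normalizedRightComp_add (gs : ℕ → ℂ → ℂ) (ginv : ℂ → ℂ) (N m : ℕ) (z : ℂ) :
    normalizedRightComp gs ginv (N + m) z
      = rightComp gs N (normalizedRightComp (fun k => gs (N + k)) ginv m (ginv^[N] z)) := by
  rw [normalizedRightComp, rightComp_add, add_comm N m, Function.iterate_add_apply]; rfl

lemma mapsTo_normalizedRightComp (hinvm : MapsTo ginv unitDisc unitDisc)
    (hm : ∀ n, MapsTo (gs n) unitDisc unitDisc) (n : ℕ) :
    MapsTo (normalizedRightComp gs ginv n) unitDisc unitDisc :=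
  (mapsTo_rightComp hm n).comp (hinvm.iterate n)

lemma differentiableOn_normalizedRightComp (hinvd : DifferentiableOn ℂ ginv unitDisc)
    (hinvm : MapsTo ginv unitDisc unitDisc) (hd : ∀ n, DifferentiableOn ℂ (gs n) unitDisc)
    (hm : ∀ n, MapsTo (gs n) unitDisc unitDisc) (n : ℕ) :
    DifferentiableOn ℂ (normalizedRightComp gs ginv n) unitDisc :=
  (differentiableOn_rightComp hd hm n).comp (hinvd.iterate hinvm n) (hinvm.iterate n)

lemma pseudoHypDist_normalizedRightComp_succ_le (hg : DifferentiableOn ℂ g unitDisc)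
    (hgm : MapsTo g unitDisc unitDisc) (hinvm : MapsTo ginv unitDisc unitDisc)
    (hinv : RightInvOn ginv g unitDisc) (hd : ∀ n, DifferentiableOn ℂ (gs n) unitDisc)
    (hm : ∀ n, MapsTo (gs n) unitDisc unitDisc) {z : ℂ} (hz : z ∈ unitDisc) (n : ℕ) :
    pseudoHypDist (normalizedRightComp gs ginv (n + 1) z) (normalizedRightComp gs ginv n z)
      ≤ pseudoHypDist (ginv (gs n (ginv^[n + 1] z))) (ginv^[n + 1] z) := by
  set w := ginv^[n + 1] z
  have hw : w ∈ unitDisc := hinvm.iterate (n + 1) hz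
  have hgw : g w = ginv^[n] z := by
    rw [show w = ginv (ginv^[n] z) from Function.iterate_succ_apply' ..]
    exact hinv (hinvm.iterate n hz)
  have hsw : gs n w ∈ unitDisc := hm n hw
  calc _ = pseudoHypDist (rightComp gs n (gs n w)) (rightComp gs n (g w)) := by
        rw [hgw]; rfl
    _ ≤ pseudoHypDist (gs n w) (g w) := pseudoHypDist_map_le (differentiableOn_rightComp hd hm n)
        (mapsTo_rightComp hm n) hsw (hgm hw)
    _ = pseudoHypDist (g (ginv (gs n w))) (g w) := by rw [hinv hsw]
    _ ≤ pseudoHypDist (ginv (gs n w)) w := pseudoHypDist_map_le hg hgm (hinvm hsw) hw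

end NormalizedRightComp

section DiscSequence

variable {x : ℕ → ℂ} {d : ℕ → ℝ} {y : ℂ}

lemma pseudoHypDist_le_tsum_of_succ_le (hx : ∀ n, x n ∈ unitDisc)
    (hd : ∀ n, pseudoHypDist (x (n + 1)) (x n) ≤ d n) (hds : Summable d) {m n : ℕ}
    (hmn : m ≤ n) : pseudoHypDist (x n) (x m) ≤ ∑' k, d (m + k) := by
  have hsum : pseudoHypDist (x n) (x m) ≤ ∑ k ∈ Finset.range (n - m), d (m + k) := by
    induction n, hmn using Nat.le_induction with
    | base => simp
    | succ n hmn ih =>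
      rw [Nat.succ_sub hmn, Finset.sum_range_succ, Nat.add_sub_cancel' hmn]
      linarith [pseudoHypDist_triangle (hx (n + 1)) (hx n) (hx m), hd n]
  refine hsum.trans (Summable.sum_le_tsum _ (fun k _ => ?_) ?_)
  · exact (pseudoHypDist_nonneg _ _).trans (hd _)
  · simpa [add_comm] using (summable_nat_add_iff m).2 hds

lemma mem_unitDisc_of_tendsto (hx : ∀ n, x n ∈ unitDisc)
    (hd : ∀ n, pseudoHypDist (x (n + 1)) (x n) ≤ d n) (hds : Summable d)
    (hlim : Tendsto x atTop (𝓝 y)) : y ∈ unitDisc := by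
  have htail : Tendsto (fun m => ∑' k, d (m + k)) atTop (𝓝 0) := by
    simpa [add_comm] using tendsto_sum_nat_add d
  obtain ⟨m, hm⟩ := (htail.eventually_lt_const one_pos).exists
  have hs0 : 0 ≤ ∑' k, d (m + k) :=
    tsum_nonneg fun k => (pseudoHypDist_nonneg _ _).trans (hd _)
  have hbound : ∀ n ≥ m, ‖x n‖ ≤ pseudoHypAdd (∑' k, d (m + k)) ‖x m‖ := fun n hn =>
    (norm_le_pseudoHypAdd (hx n) (hx m)).trans (pseudoHypAdd_le_pseudoHypAdd
      (pseudoHypDist_nonneg _ _) (norm_nonneg _) (pseudoHypDist_le_tsum_of_succ_le hx hd hds hn)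
      le_rfl hm.le (hx m).le)
  exact (le_of_tendsto ((continuous_norm.tendsto y).comp hlim) (eventually_atTop.2 ⟨m, hbound⟩))
    |>.trans_lt (pseudoHypAdd_lt_one hs0 hm (norm_nonneg _) (hx m))

lemma pseudoHypDist_le_tsum_of_tendsto (hx : ∀ n, x n ∈ unitDisc)
    (hd : ∀ n, pseudoHypDist (x (n + 1)) (x n) ≤ d n) (hds : Summable d)
    (hlim : Tendsto x atTop (𝓝 y)) (m : ℕ) : pseudoHypDist y (x m) ≤ ∑' k, d (m + k) := by
  have hy := mem_unitDisc_of_tendsto hx hd hds hlim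
  have hcont : ContinuousAt (fun u => pseudoHypDist u (x m)) y :=
    ((continuousAt_id.sub continuousAt_const).div (continuousAt_const.sub
      (continuousAt_const.mul continuousAt_id))
      (one_sub_conj_mul_ne_zero (norm_mul_lt_one hy (hx m)))).norm
  exact le_of_tendsto (hcont.tendsto.comp hlim)
    (eventually_atTop.2 ⟨m, fun n hn => pseudoHypDist_le_tsum_of_succ_le hx hd hds hn⟩)

end DiscSequence

theorem exists_tendstoLocallyUniformlyOn_of_dist_succ_le {α β : Type*} [TopologicalSpace α]
    [LocallyCompactSpace α] [MetricSpace β] [CompleteSpace β] {F : ℕ → α → β} {U : Set α}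
    (hU : IsOpen U) {c : ℕ → ℝ} (hc : Summable c)
    (h : ∀ K ⊆ U, IsCompact K → ∃ C, ∀ z ∈ K, ∀ n, dist (F n z) (F (n + 1) z) ≤ C * c n) :
    ∃ G, TendstoLocallyUniformlyOn F G atTop U := by
  have hpt : ∀ z, ∃ y, z ∈ U → Tendsto (F · z) atTop (𝓝 y) := fun z => by
    by_cases hz : z ∈ U
    · obtain ⟨C, hC⟩ := h {z} (singleton_subset_iff.2 hz) isCompact_singleton
      obtain ⟨y, hy⟩ := cauchySeq_tendsto_of_complete
        (cauchySeq_of_dist_le_of_summable _ (hC z rfl) (hc.mul_left C))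
      exact ⟨y, fun _ => hy⟩
    · exact ⟨F 0 z, fun hz' => absurd hz' hz⟩
  choose G hG using hpt
  refine ⟨G, (tendstoLocallyUniformlyOn_iff_forall_isCompact hU).2 fun K hKU hK => ?_⟩
  obtain ⟨C, hC⟩ := h K hKU hK
  rw [Metric.tendstoUniformlyOn_iff]
  intro ε hε
  have htail : Tendsto (fun m => ∑' k, C * c (m + k)) atTop (𝓝 0) := by
    simpa [add_comm] using tendsto_sum_nat_add fun n => C * c n
  filter_upwards [htail.eventually_lt_const hε] with m hm z hz
  rw [dist_comm]
  exact (dist_le_tsum_of_dist_le_of_tendsto _ (hC z hz) (hc.mul_left C) (hG z (hKU hz)) m)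
    |>.trans_lt hm

section Stability

variable {g ginv : ℂ → ℂ} {gs : ℕ → ℂ → ℂ} {p a b : ℂ}

theorem exists_pseudoHypDist_normalizedRightComp_succ_le (hg : DifferentiableOn ℂ g unitDisc)
    (hgm : MapsTo g unitDisc unitDisc) (hinvd : DifferentiableOn ℂ ginv unitDisc)
    (hinvm : MapsTo ginv unitDisc unitDisc) (hinv : RightInvOn ginv g unitDisc)
    (hp : p ∈ unitDisc) (hginvp : ginv p = p) (ha : a ∈ unitDisc) (hb : b ∈ unitDisc)
    (hab : a ≠ b) {r : ℝ} (hr0 : 0 ≤ r) (hr1 : r < 1) :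
    ∃ C, 0 ≤ C ∧ ∀ gs : ℕ → ℂ → ℂ, (∀ n, DifferentiableOn ℂ (gs n) unitDisc) →
      (∀ n, MapsTo (gs n) unitDisc unitDisc) → ∀ z ∈ unitDisc, ‖z‖ ≤ r → ∀ n,
        pseudoHypDist (normalizedRightComp gs ginv (n + 1) z) (normalizedRightComp gs ginv n z)
          ≤ C * twoPointDisplacement (ginv ∘ gs n) a b := by
  obtain ⟨R, hR0, hR1, hR⟩ := exists_norm_iterate_le hinvd hinvm hp hginvp hr0 hr1
  obtain ⟨C, hC0, hC⟩ := exists_pseudoHypDist_apply_self_le ha hb hab hR0 hR1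
  refine ⟨C, hC0, fun gs hd hm z hz hzr n => ?_⟩
  exact (pseudoHypDist_normalizedRightComp_succ_le hg hgm hinvm hinv hd hm hz n).trans
    (hC _ (hinvd.comp (hd n) (hm n)) (hinvm.comp (hm n)) _ (hinvm.iterate (n + 1) hz)
      (hR z hz hzr (n + 1)))

theorem exists_tendstoLocallyUniformlyOn_normalizedRightComp (hg : DifferentiableOn ℂ g unitDisc)
    (hgm : MapsTo g unitDisc unitDisc) (hinvd : DifferentiableOn ℂ ginv unitDisc)
    (hinvm : MapsTo ginv unitDisc unitDisc) (hinv : RightInvOn ginv g unitDisc)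
    (hp : p ∈ unitDisc) (hginvp : ginv p = p) (ha : a ∈ unitDisc) (hb : b ∈ unitDisc)
    (hab : a ≠ b) (hd : ∀ n, DifferentiableOn ℂ (gs n) unitDisc)
    (hm : ∀ n, MapsTo (gs n) unitDisc unitDisc)
    (hsum : Summable fun n => twoPointDisplacement (ginv ∘ gs n) a b) :
    ∃ G, TendstoLocallyUniformlyOn (normalizedRightComp gs ginv) G atTop unitDisc ∧
      DifferentiableOn ℂ G unitDisc ∧ MapsTo G unitDisc unitDisc := by
  have hstep := fun {r : ℝ} (hr0 : 0 ≤ r) (hr1 : r < 1) =>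
    exists_pseudoHypDist_normalizedRightComp_succ_le hg hgm hinvd hinvm hinv hp hginvp ha hb hab
      hr0 hr1
  have hF := mapsTo_normalizedRightComp hinvm hm
  obtain ⟨G, hG⟩ := exists_tendstoLocallyUniformlyOn_of_dist_succ_le
    (F := normalizedRightComp gs ginv) isOpen_unitDisc hsum
    fun K hKD hK => by
      obtain ⟨r, hr0, hr1, hKr⟩ := hK.exists_norm_le_of_subset_unitDisc hKD
      obtain ⟨C, -, hC⟩ := hstep hr0 hr1
      refine ⟨2 * C, fun z hz n => ?_⟩
      rw [dist_comm, mul_assoc]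
      exact (dist_le_two_mul_pseudoHypDist (hF _ (hKD hz)) (hF _ (hKD hz))).trans
        (mul_le_mul_of_nonneg_left (hC gs hd hm z (hKD hz) (hKr z hz) n) zero_le_two)
  refine ⟨G, hG, hG.differentiableOn (Eventually.of_forall
    (differentiableOn_normalizedRightComp hinvd hinvm hd hm)) isOpen_unitDisc, fun z hz => ?_⟩
  obtain ⟨C, -, hC⟩ := hstep (norm_nonneg z) hz
  exact mem_unitDisc_of_tendsto (fun n => hF n hz) (hC gs hd hm z hz le_rfl) (hsum.mul_left C)
    (hG.tendsto_at hz)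

lemma NonconstOn.congr {f f' : ℂ → ℂ} {U : Set ℂ} (hf : NonconstOn f U) (hff' : EqOn f f' U) :
    NonconstOn f' U := by
  obtain ⟨z, hz, w, hw, hne⟩ := hf
  exact ⟨z, hz, w, hw, by rwa [← hff' hz, ← hff' hw]⟩

lemma eqOn_comp_of_tendsto_normalizedRightComp (hinvm : MapsTo ginv unitDisc unitDisc)
    (hd : ∀ n, DifferentiableOn ℂ (gs n) unitDisc) (hm : ∀ n, MapsTo (gs n) unitDisc unitDisc)
    {G H : ℂ → ℂ} (N : ℕ)
    (hG : ∀ z ∈ unitDisc, Tendsto (normalizedRightComp gs ginv · z) atTop (𝓝 (G z)))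
    (hH : ∀ z ∈ unitDisc,
      Tendsto (normalizedRightComp (fun k => gs (N + k)) ginv · z) atTop (𝓝 (H z)))
    (hHm : MapsTo H unitDisc unitDisc) :
    EqOn G (rightComp gs N ∘ H ∘ ginv^[N]) unitDisc := by
  intro z hz
  have hzN := hinvm.iterate N hz
  have hcont : ContinuousAt (rightComp gs N) (H (ginv^[N] z)) :=
    (differentiableOn_rightComp hd hm N).continuousOn.continuousAt
      (isOpen_unitDisc.mem_nhds (hHm hzN))
  have hlim := hcont.tendsto.comp (hH _ hzN)
  simp only [Function.comp_def, ← normalizedRightComp_add] at hlim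
  have hshift := (hG z hz).comp (tendsto_add_atTop_nat N)
  simp only [Function.comp_def, add_comm _ N] at hshift
  exact tendsto_nhds_unique hshift hlim

theorem exists_tendstoLocallyUniformlyOn_tail_ne (hg : DifferentiableOn ℂ g unitDisc)
    (hgm : MapsTo g unitDisc unitDisc) (hinvd : DifferentiableOn ℂ ginv unitDisc)
    (hinvm : MapsTo ginv unitDisc unitDisc) (hinv : RightInvOn ginv g unitDisc)
    (hp : p ∈ unitDisc) (hginvp : ginv p = p) (ha : a ∈ unitDisc) (hb : b ∈ unitDisc)
    (hab : a ≠ b) (hd : ∀ n, DifferentiableOn ℂ (gs n) unitDisc)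
    (hm : ∀ n, MapsTo (gs n) unitDisc unitDisc)
    (hsum : Summable fun n => twoPointDisplacement (ginv ∘ gs n) a b) :
    ∃ N H, TendstoLocallyUniformlyOn (normalizedRightComp (fun k => gs (N + k)) ginv) H atTop
      unitDisc ∧ DifferentiableOn ℂ H unitDisc ∧ MapsTo H unitDisc unitDisc ∧ H a ≠ H b := by
  obtain ⟨C, -, hC⟩ := exists_pseudoHypDist_normalizedRightComp_succ_le hg hgm hinvd hinvm hinv
    hp hginvp ha hb hab (le_max_of_le_left (norm_nonneg a)) (max_lt ha hb)
  set c := fun n => C * twoPointDisplacement (ginv ∘ gs n) a b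
  have htail : Tendsto (fun N => ∑' k, c (N + k)) atTop (𝓝 0) := by
    simpa [add_comm] using tendsto_sum_nat_add c
  have hab' : 0 < pseudoHypDist a b := norm_pos_iff.2 (mobius_ne_zero hb ha hab)
  obtain ⟨N, hN⟩ := (htail.eventually_lt_const (half_pos hab')).exists
  have hsumN : Summable fun k => twoPointDisplacement (ginv ∘ gs (N + k)) a b := by
    simpa [add_comm] using (summable_nat_add_iff N).2 hsum
  obtain ⟨H, hH, hHd, hHm⟩ := exists_tendstoLocallyUniformlyOn_normalizedRightComp hg hgm hinvd
    hinvm hinv hp hginvp ha hb hab (fun k => hd (N + k)) (fun k => hm (N + k)) hsumN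
  have hclose : ∀ z ∈ unitDisc, ‖z‖ ≤ max ‖a‖ ‖b‖ → pseudoHypDist (H z) z ≤ ∑' k, c (N + k) :=
    fun z hz hzr => by
      simpa using pseudoHypDist_le_tsum_of_tendsto
        (fun n => mapsTo_normalizedRightComp hinvm (fun k => hm (N + k)) n hz)
        (hC _ (fun k => hd (N + k)) (fun k => hm (N + k)) z hz hzr) (hsumN.mul_left C)
        (hH.tendsto_at hz) 0
  refine ⟨N, H, hH, hHd, hHm, fun heq => ?_⟩
  have h1 := pseudoHypDist_triangle ha (hHm ha) hb
  have h2 : pseudoHypDist (H a) b = pseudoHypDist (H b) b := by rw [heq]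
  rw [pseudoHypDist_comm a (H a), h2] at h1
  linarith [hclose a ha (le_max_left _ _), hclose b hb (le_max_right _ _)]

theorem nonconstOn_of_tendstoLocallyUniformlyOn_normalizedRightComp
    (hg : DifferentiableOn ℂ g unitDisc) (hgm : MapsTo g unitDisc unitDisc)
    (hinvd : DifferentiableOn ℂ ginv unitDisc) (hinvm : MapsTo ginv unitDisc unitDisc)
    (hinv : RightInvOn ginv g unitDisc) (hp : p ∈ unitDisc) (hginvp : ginv p = p)
    (ha : a ∈ unitDisc) (hb : b ∈ unitDisc) (hab : a ≠ b)
    (hd : ∀ n, DifferentiableOn ℂ (gs n) unitDisc) (hm : ∀ n, MapsTo (gs n) unitDisc unitDisc)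
    (hnc : ∀ n, NonconstOn (gs n) unitDisc)
    (hsum : Summable fun n => twoPointDisplacement (ginv ∘ gs n) a b) {G : ℂ → ℂ}
    (hG : TendstoLocallyUniformlyOn (normalizedRightComp gs ginv) G atTop unitDisc) :
    NonconstOn G unitDisc := by
  obtain ⟨N, H, hH, hHd, hHm, hHab⟩ := exists_tendstoLocallyUniformlyOn_tail_ne hg hgm hinvd
    hinvm hinv hp hginvp ha hb hab hd hm hsum
  have hinvN : DifferentiableOn ℂ ginv^[N] unitDisc := hinvd.iterate hinvm N
  have hHinvN : NonconstOn (H ∘ ginv^[N]) unitDisc :=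
    NonconstOn.comp isOpen_unitDisc isPreconnected_unitDisc isOpen_unitDisc
      isPreconnected_unitDisc hHd hinvN (hinvm.iterate N) ⟨a, ha, b, hb, hHab⟩
      (hinv.injOn.iterate hinvm N).nonconstOn_unitDisc
  refine NonconstOn.congr ?_ (eqOn_comp_of_tendsto_normalizedRightComp hinvm hd hm N
    (fun z hz => hG.tendsto_at hz) (fun z hz => hH.tendsto_at hz) hHm).symm
  exact (nonconstOn_rightComp hd hm hnc N).comp isOpen_unitDisc isPreconnected_unitDisc
    isOpen_unitDisc isPreconnected_unitDisc (differentiableOn_rightComp hd hm N)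
    (hHd.comp hinvN (hinvm.iterate N)) (hHm.comp (hinvm.iterate N)) hHinvN

end Stability

lemma pseudoHypDist_apply_le_hdist {g ginv : ℂ → ℂ} (hinvd : DifferentiableOn ℂ ginv unitDisc)
    (hinvm : MapsTo ginv unitDisc unitDisc) (hinv : LeftInvOn ginv g unitDisc)
    (hgm : MapsTo g unitDisc unitDisc) {u v : ℂ} (hu : u ∈ unitDisc) (hv : v ∈ unitDisc) :
    pseudoHypDist (ginv u) v ≤ hdist u (g v) := by
  calc pseudoHypDist (ginv u) v = pseudoHypDist (ginv u) (ginv (g v)) := by rw [hinv hv]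
    _ ≤ pseudoHypDist u (g v) := pseudoHypDist_map_le hinvd hinvm hu (hgm hv)
    _ ≤ hdist u (g v) := pseudoHypDist_le_hdist hu (hgm hv)

/-- Here "g is the identity or an elliptic Möbius transformation fixing 𝔻" is encoded as:
g is a conformal automorphism of 𝔻 with a fixed point in 𝔻; `ginv` is its inverse on 𝔻,
so that `ginv^[n]` is `g⁻ⁿ`. -/
theorem stability_identity_elliptic_right_general
    (g ginv : ℂ → ℂ)
    (hg : DifferentiableOn ℂ g unitDisc) (hgmap : MapsTo g unitDisc unitDisc)
    (hfix : ∃ p ∈ unitDisc, g p = p)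
    (hinvmap : MapsTo ginv unitDisc unitDisc)
    (hinv : InvOn ginv g unitDisc unitDisc)
    (gseq : ℕ → ℂ → ℂ)
    (hholo : ∀ n, DifferentiableOn ℂ (gseq n) unitDisc)
    (hself : ∀ n, MapsTo (gseq n) unitDisc unitDisc)
    (hnonconst : ∀ n, ∃ z ∈ unitDisc, ∃ w ∈ unitDisc, gseq n z ≠ gseq n w)
    (a b : ℂ) (ha : a ∈ unitDisc) (hb : b ∈ unitDisc) (hab : a ≠ b)
    (hsa : Summable fun n => hdist (gseq n a) (g a))
    (hsb : Summable fun n => hdist (gseq n b) (g b)) :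
    ∃ G : ℂ → ℂ, DifferentiableOn ℂ G unitDisc ∧ MapsTo G unitDisc unitDisc ∧
      (∃ z ∈ unitDisc, ∃ w ∈ unitDisc, G z ≠ G w) ∧
      TendstoLocallyUniformlyOn (fun n z => rightComp gseq n (ginv^[n] z)) G atTop unitDisc := by
  obtain ⟨p, hp, hgp⟩ := hfix
  have hinvd : DifferentiableOn ℂ ginv unitDisc :=
    hg.of_invOn isOpen_unitDisc isOpen_unitDisc hinvmap hinv
  have hginvp : ginv p = p := by simpa [hgp] using hinv.1 hp
  have hsum : Summable fun n => twoPointDisplacement (ginv ∘ gseq n) a b :=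
    (hsa.add hsb).of_nonneg_of_le (fun n => twoPointDisplacement_nonneg _ a b) fun n =>
      add_le_add (pseudoHypDist_apply_le_hdist hinvd hinvmap hinv.1 hgmap (hself n ha) ha)
        (pseudoHypDist_apply_le_hdist hinvd hinvmap hinv.1 hgmap (hself n hb) hb)
  obtain ⟨G, hG, hGd, hGm⟩ := exists_tendstoLocallyUniformlyOn_normalizedRightComp hg hgmap
    hinvd hinvmap hinv.2 hp hginvp ha hb hab hholo hself hsum
  exact ⟨G, hGd, hGm, nonconstOn_of_tendstoLocallyUniformlyOn_normalizedRightComp hg hgmap hinvd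
    hinvmap hinv.2 hp hginvp ha hb hab hholo hself hnonconst hsum hG, hG⟩

/-- **Stability at the identity or an elliptic transformation, right compositions.**
Here "g is the identity or an elliptic Möbius transformation fixing 𝔻" is encoded as:
g is a conformal automorphism of 𝔻 with a fixed point in 𝔻; `ginv` is its inverse on 𝔻,
so that `ginv^[n]` is `g⁻ⁿ`. -/
theorem stability_identity_elliptic_right
    (g ginv : ℂ → ℂ)
    (hg : DifferentiableOn ℂ g unitDisc) (hgmap : MapsTo g unitDisc unitDisc)
    (hgbij : BijOn g unitDisc unitDisc)
    (hfix : ∃ p ∈ unitDisc, g p = p)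
    (hinvmap : MapsTo ginv unitDisc unitDisc)
    (hinv : InvOn ginv g unitDisc unitDisc)
    (gseq : ℕ → ℂ → ℂ)
    (hholo : ∀ n, DifferentiableOn ℂ (gseq n) unitDisc)
    (hself : ∀ n, MapsTo (gseq n) unitDisc unitDisc)
    (hnonconst : ∀ n, ∃ z ∈ unitDisc, ∃ w ∈ unitDisc, gseq n z ≠ gseq n w)
    (a b : ℂ) (ha : a ∈ unitDisc) (hb : b ∈ unitDisc) (hab : a ≠ b)
    (hsa : Summable fun n => hdist (gseq n a) (g a))
    (hsb : Summable fun n => hdist (gseq n b) (g b)) :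
    ∃ G : ℂ → ℂ, DifferentiableOn ℂ G unitDisc ∧ MapsTo G unitDisc unitDisc ∧
      (∃ z ∈ unitDisc, ∃ w ∈ unitDisc, G z ≠ G w) ∧
      TendstoLocallyUniformlyOn (fun n z => rightComp gseq n (ginv^[n] z)) G atTop unitDisc :=
  stability_identity_elliptic_right_general g ginv hg hgmap hfix hinvmap hinv gseq hholo hself
    hnonconst a b ha hb hab hsa hsb
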